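/- arXiv:0807.2544 — 2 statements merged into one kernel-verified Lean document; each statement's English description precedes it below -/
import Mathlib

section
/- Let N, n be natural numbers with n ≤ N and let δ ∈ (0, 1) be real. Then Σ_{A=0}^{N−n} (C(N−A, n)/C(N, n)) · C(N, A)·δ^A·(1−δ)^{N−A} = (1−δ)^n; that is, under the Binomial(N, δ) prior on A and hypergeometric sampling without replacement, the marginal probability that a sample of size n contains no attribute elements is P(a = 0) = (1−δ)^n. -/
open Finset

theorem Nat.choose_sub_mul_choose {N n A : ℕ} (h : A + n ≤ N) :
    (N - A).choose n * N.choose A = N.choose n * (N - n).choose A := by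
  have h' := Nat.choose_mul (n := N) (k := N - A) (s := n) (by omega)
  rw [Nat.choose_symm (by omega), show N - A - n = N - n - A by omega,
    Nat.choose_symm (by omega)] at h'
  rwa [mul_comm]

theorem sum_range_choose_mul_pow_mul_one_sub_pow {R : Type*} [CommRing R] (m : ℕ) (δ : R) :
    ∑ A ∈ range (m + 1), (m.choose A : R) * δ ^ A * (1 - δ) ^ (m - A) = 1 := by
  calc ∑ A ∈ range (m + 1), (m.choose A : R) * δ ^ A * (1 - δ) ^ (m - A)
      = (δ + (1 - δ)) ^ m := by
        rw [add_pow]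
        exact sum_congr rfl fun A _ => by ring
    _ = 1 := by rw [add_sub_cancel, one_pow]

/-- Conditioning the binomial prior on an empty sample of size `n` leaves a binomial law on the
remaining `N - n` elements. -/
theorem hypergeometric_zero_mul_binomial {K : Type*} [Field K] [CharZero K] {N n A : ℕ}
    (h : A + n ≤ N) (δ : K) :
    ((N - A).choose n : K) / N.choose n * (N.choose A * δ ^ A * (1 - δ) ^ (N - A))
      = (1 - δ) ^ n * ((N - n).choose A * δ ^ A * (1 - δ) ^ (N - n - A)) := by
  have hchoose : ((N - A).choose n : K) * N.choose A = N.choose n * (N - n).choose A := by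
    exact_mod_cast Nat.choose_sub_mul_choose h
  have hpos : (N.choose n : K) ≠ 0 := by exact_mod_cast (Nat.choose_pos (by omega)).ne'
  rw [show (1 - δ) ^ (N - A) = (1 - δ) ^ (N - n - A) * (1 - δ) ^ n by
    rw [← pow_add]; congr 1; omega]
  field_simp
  linear_combination (1 - δ) ^ (N - n - A) * (1 - δ) ^ n * δ ^ A * hchoose

theorem marginal_zero_count_general
    (N n : ℕ) (hn : n ≤ N) (δ : ℝ) :
    ∑ A ∈ Finset.range (N - n + 1),
        (((N - A).choose n : ℝ) / (N.choose n : ℝ)) *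
          ((N.choose A : ℝ) * δ ^ A * (1 - δ) ^ (N - A))
      = (1 - δ) ^ n := by
  have hterm : ∀ A ∈ range (N - n + 1),
      ((N - A).choose n : ℝ) / N.choose n * (N.choose A * δ ^ A * (1 - δ) ^ (N - A))
        = (1 - δ) ^ n * ((N - n).choose A * δ ^ A * (1 - δ) ^ (N - n - A)) := fun A hA =>
    hypergeometric_zero_mul_binomial (by rw [mem_range] at hA; omega) δ
  rw [sum_congr rfl hterm, ← mul_sum, sum_range_choose_mul_pow_mul_one_sub_pow, mul_one]

/-- Under the Binomial(N, δ) prior on `A` and hypergeometric sampling without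
replacement, the marginal probability that a sample of size `n` contains no
attribute elements is `(1 − δ)^n`. -/
theorem marginal_zero_count
    (N n : ℕ) (hn : n ≤ N) (δ : ℝ) (hδ0 : 0 < δ) (hδ1 : δ < 1) :
    ∑ A ∈ Finset.range (N - n + 1),
        (((N - A).choose n : ℝ) / (N.choose n : ℝ)) *
          ((N.choose A : ℝ) * δ ^ A * (1 - δ) ^ (N - A))
      = (1 - δ) ^ n :=
  marginal_zero_count_general N n hn δ
end

section
/- Let N, n, a, j be natural numbers with a ≤ n ≤ N and j ≤ N − n, and let δ ∈ (0, 1) be real. Under the Binomial(N, δ) prior on A and hypergeometric sampling without replacement, the posterior probability mass function of A given a satisfies Pr{A = a + j | a} = (C(A, a)·C(N−A, n−a)/C(N, n)) · C(N, A)·δ^A·(1−δ)^{N−A} / (C(n, a)·δ^a·(1−δ)^{n−a}) evaluated at A = a + j, and this equals the Binomial(N−n, δ) mass C(N−n, j)·δ^j·(1−δ)^{(N−n)−j}. -/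
/-!
Likelihood times prior is governed by the trinomial revision
`C(N, A) C(A, a) C(N - A, n - a) = C(N, n) C(n, a) C(N - n, A - a)` (both sides count pairs of an
`A`-subset and an `n`-subset of an `N`-set meeting in exactly `a` elements). Dividing by the
marginal cancels `C(N, n) C(n, a) δ^a (1 - δ)^(n - a)` and leaves the Binomial(N - n, δ) mass
at `A - a`.
-/

namespace Nat

theorem choose_mul_sub_choose_comm (m j k : ℕ) :
    m.choose j * (m - j).choose k = m.choose k * (m - k).choose j :=
  calc m.choose j * (m - j).choose k = m.choose (j + k) * (j + k).choose j := by
        rw [choose_mul (le_add_right j k), Nat.add_sub_cancel_left]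
    _ = m.choose (j + k) * (j + k).choose k := by rw [choose_symm_add]
    _ = m.choose k * (m - k).choose j := by
        rw [choose_mul (le_add_left k j), Nat.add_sub_cancel]

theorem choose_mul_choose_mul_sub_choose {N n a : ℕ} (han : a ≤ n) (j : ℕ) :
    N.choose (a + j) * (a + j).choose a * (N - (a + j)).choose (n - a) =
      N.choose n * n.choose a * (N - n).choose j :=
  calc N.choose (a + j) * (a + j).choose a * (N - (a + j)).choose (n - a)
      = N.choose a * ((N - a).choose j * (N - a - j).choose (n - a)) := by
        rw [choose_mul (le_add_right a j), Nat.add_sub_cancel_left, Nat.sub_sub, mul_assoc]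
    _ = N.choose a * (N - a).choose (n - a) * (N - a - (n - a)).choose j := by
        rw [choose_mul_sub_choose_comm, mul_assoc]
    _ = N.choose n * n.choose a * (N - n).choose j := by
        rw [← choose_mul han, show N - a - (n - a) = N - n by omega]

end Nat

/-- Under the Binomial(N, δ) prior on `A` and hypergeometric sampling, the posterior
mass of `A = a + j` given `a` is the Binomial(N−n, δ) mass at `j`. -/
theorem posterior_mass_binomial
    (N n a j : ℕ) (han : a ≤ n) (hn : n ≤ N) (hj : j ≤ N - n)
    (δ : ℝ) (hδ0 : 0 < δ) (hδ1 : δ < 1) :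
    (((a + j).choose a : ℝ) * ((N - (a + j)).choose (n - a) : ℝ) / (N.choose n : ℝ)) *
        ((N.choose (a + j) : ℝ) * δ ^ (a + j) * (1 - δ) ^ (N - (a + j))) /
        ((n.choose a : ℝ) * δ ^ a * (1 - δ) ^ (n - a))
      = ((N - n).choose j : ℝ) * δ ^ j * (1 - δ) ^ ((N - n) - j) := by
  have hNn : (N.choose n : ℝ) ≠ 0 := by exact_mod_cast (Nat.choose_pos hn).ne'
  have hna : (n.choose a : ℝ) ≠ 0 := by exact_mod_cast (Nat.choose_pos han).ne'
  have hδ : δ ≠ 0 := hδ0.ne'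
  have h1δ : 1 - δ ≠ 0 := by linarith
  have hfailures : (1 - δ) ^ (N - (a + j)) = (1 - δ) ^ (n - a) * (1 - δ) ^ (N - n - j) := by
    rw [← pow_add, show n - a + (N - n - j) = N - (a + j) by omega]
  have hcounts : (N.choose (a + j) * (a + j).choose a * (N - (a + j)).choose (n - a) : ℝ) =
      N.choose n * n.choose a * (N - n).choose j := by
    exact_mod_cast Nat.choose_mul_choose_mul_sub_choose han j
  rw [pow_add, hfailures]
  field_simp
  linear_combination hcounts
end
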